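/- arXiv:1810.06787 — 4 statements merged into one kernel-verified Lean document; each statement's English description precedes it below -/
import Mathlib

section
/- For positive reals λ_i ≠ λ_j, the two expressions ∫₀¹∫₀¹ [(λ_j/λ_i)^{st} + (λ_i/λ_j)^{st}]·t ds dt and ∫₀¹∫₀¹ (λ_i/λ_j)^{s+t−1} ds dt are equal; both equal (λ_i/λ_j + λ_j/λ_i − 2)/(log(λ_i/λ_j))². When λ_i = λ_j both expressions equal 1. -/
open Real intervalIntegral

lemma int_exp_mul (c : ℝ) (hc : c ≠ 0) :
    (∫ s in (0 : ℝ)..1, Real.exp (c * s)) = (Real.exp c - 1) / c := by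
  rw [intervalIntegral.integral_comp_mul_left (fun x => Real.exp x) hc]
  simp [smul_eq_mul, div_eq_inv_mul]

lemma int_exp_mul' (c : ℝ) :
    (∫ s in (0 : ℝ)..1, Real.exp (c * s)) = if c = 0 then 1 else (Real.exp c - 1) / c := by
  split_ifs with h
  · simp [h]
  · exact int_exp_mul c h

/-- For positive reals `λᵢ`, `λⱼ`, the two expressions
`∫₀¹∫₀¹ [(λⱼ/λᵢ)^{st} + (λᵢ/λⱼ)^{st}]·t ds dt` and `∫₀¹∫₀¹ (λᵢ/λⱼ)^{s+t−1} ds dt`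
are equal; if `λᵢ ≠ λⱼ` both equal `(λᵢ/λⱼ + λⱼ/λᵢ − 2)/(log(λᵢ/λⱼ))²`, and if
`λᵢ = λⱼ` both equal `1`. -/
theorem integral_hessian_forms_equal (li lj : ℝ) (hi : 0 < li) (hj : 0 < lj) :
    (∫ t in (0 : ℝ)..1, (∫ s in (0 : ℝ)..1, ((lj / li) ^ (s * t) + (li / lj) ^ (s * t)) * t)) =
      (∫ t in (0 : ℝ)..1, (∫ s in (0 : ℝ)..1, (li / lj) ^ (s + t - 1))) ∧
    (li ≠ lj →
      (∫ t in (0 : ℝ)..1, (∫ s in (0 : ℝ)..1, ((lj / li) ^ (s * t) + (li / lj) ^ (s * t)) * t)) =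
        (li / lj + lj / li - 2) / (Real.log (li / lj)) ^ 2) ∧
    (li = lj →
      (∫ t in (0 : ℝ)..1, (∫ s in (0 : ℝ)..1, ((lj / li) ^ (s * t) + (li / lj) ^ (s * t)) * t)) = 1 ∧
      (∫ t in (0 : ℝ)..1, (∫ s in (0 : ℝ)..1, (li / lj) ^ (s + t - 1))) = 1) := by
  have hr : (0 : ℝ) < li / lj := div_pos hi hj
  have hr' : (0 : ℝ) < lj / li := div_pos hj hi
  rcases eq_or_ne li lj with heq | hne
  · subst heq
    have h1 : li / li = 1 := div_self hi.ne'
    have e1 : (∫ t in (0 : ℝ)..1,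
        (∫ s in (0 : ℝ)..1, ((li / li) ^ (s * t) + (li / li) ^ (s * t)) * t)) = 1 := by
      have key : ∀ t : ℝ, (∫ s in (0 : ℝ)..1, ((li / li) ^ (s * t) + (li / li) ^ (s * t)) * t)
          = 2 * t := by
        intro t
        have h2 : ∀ s : ℝ, ((li / li) ^ (s * t) + (li / li) ^ (s * t)) * t = 2 * t := by
          intro s; rw [h1, Real.one_rpow]; ring
        rw [intervalIntegral.integral_congr (fun s _ => h2 s),
          intervalIntegral.integral_const]
        simp
      rw [intervalIntegral.integral_congr (fun t _ => key t),
        intervalIntegral.integral_const_mul, integral_id]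
      norm_num
    have e2 : (∫ t in (0 : ℝ)..1, (∫ s in (0 : ℝ)..1, (li / li) ^ (s + t - 1))) = 1 := by
      have key : ∀ t : ℝ, (∫ s in (0 : ℝ)..1, (li / li) ^ (s + t - 1)) = 1 := by
        intro t
        have h2 : ∀ s : ℝ, (li / li) ^ (s + t - 1) = 1 := by
          intro s; rw [h1, Real.one_rpow]
        rw [intervalIntegral.integral_congr (fun s _ => h2 s),
          intervalIntegral.integral_const]
        simp
      rw [intervalIntegral.integral_congr (fun t _ => key t),
        intervalIntegral.integral_const]
      simp
    refine ⟨by rw [e1, e2], fun h => absurd rfl h, fun _ => ⟨e1, e2⟩⟩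
  · set c := Real.log (li / lj) with hc_def
    have hc : c ≠ 0 := by
      intro h
      apply hne
      have : li / lj = 1 := by
        have := Real.exp_log hr
        rw [← hc_def] at this
        rw [← this, h, Real.exp_zero]
      field_simp at this
      linarith
    have hexpc : Real.exp c = li / lj := Real.exp_log hr
    have hexpc' : Real.exp (-c) = lj / li := by
      rw [Real.exp_neg, hexpc, inv_div]
    have hpow : ∀ x : ℝ, (li / lj) ^ x = Real.exp (c * x) := fun x =>
      Real.rpow_def_of_pos hr x
    have hlog' : Real.log (lj / li) = -c := by
      rw [show lj / li = (li / lj)⁻¹ by rw [inv_div], Real.log_inv]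
    have hpow' : ∀ x : ℝ, (lj / li) ^ x = Real.exp (-c * x) := by
      intro x
      rw [Real.rpow_def_of_pos hr' x, hlog']
    -- first double integral
    have inner1 : ∀ t : ℝ, (∫ s in (0 : ℝ)..1, ((lj / li) ^ (s * t) + (li / lj) ^ (s * t)) * t)
        = (Real.exp (c * t) - Real.exp (-(c * t))) / c := by
      intro t
      have hrw : ∀ s : ℝ, ((lj / li) ^ (s * t) + (li / lj) ^ (s * t)) * t
          = Real.exp ((-(c * t)) * s) * t + Real.exp ((c * t) * s) * t := by
        intro s
        rw [hpow, hpow']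
        ring_nf
      rw [intervalIntegral.integral_congr (fun s _ => hrw s)]
      rw [intervalIntegral.integral_add
        (Continuous.intervalIntegrable (by fun_prop) _ _)
        (Continuous.intervalIntegrable (by fun_prop) _ _)]
      rw [intervalIntegral.integral_mul_const, intervalIntegral.integral_mul_const]
      rw [int_exp_mul', int_exp_mul']
      rcases eq_or_ne t 0 with ht | ht
      · simp [ht]
      · have h1 : -(c * t) ≠ 0 := by
          simp only [neg_ne_zero]; exact mul_ne_zero hc ht
        have h2 : c * t ≠ 0 := mul_ne_zero hc ht
        rw [if_neg h1, if_neg h2]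
        field_simp
        ring
    have outer1 : (∫ t in (0 : ℝ)..1,
        (∫ s in (0 : ℝ)..1, ((lj / li) ^ (s * t) + (li / lj) ^ (s * t)) * t))
        = (li / lj + lj / li - 2) / c ^ 2 := by
      rw [intervalIntegral.integral_congr (fun t _ => inner1 t)]
      have : ∀ t : ℝ, (Real.exp (c * t) - Real.exp (-(c * t))) / c
          = (Real.exp (c * t) - Real.exp ((-c) * t)) / c := by
        intro t; ring_nf
      rw [intervalIntegral.integral_congr (fun t _ => this t)]
      rw [intervalIntegral.integral_div]
      rw [intervalIntegral.integral_sub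
        (Continuous.intervalIntegrable (by fun_prop) _ _)
        (Continuous.intervalIntegrable (by fun_prop) _ _)]
      rw [int_exp_mul c hc, int_exp_mul (-c) (neg_ne_zero.mpr hc)]
      rw [hexpc, hexpc']
      field_simp
      ring
    -- second double integral
    have inner2 : ∀ t : ℝ, (∫ s in (0 : ℝ)..1, (li / lj) ^ (s + t - 1))
        = (Real.exp c - 1) / c * Real.exp (c * (t - 1)) := by
      intro t
      have hrw : ∀ s : ℝ, (li / lj) ^ (s + t - 1)
          = Real.exp (c * s) * Real.exp (c * (t - 1)) := by
        intro s
        rw [hpow, ← Real.exp_add]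
        ring_nf
      rw [intervalIntegral.integral_congr (fun s _ => hrw s)]
      rw [intervalIntegral.integral_mul_const, int_exp_mul c hc]
    have outer2 : (∫ t in (0 : ℝ)..1, (∫ s in (0 : ℝ)..1, (li / lj) ^ (s + t - 1)))
        = (li / lj + lj / li - 2) / c ^ 2 := by
      rw [intervalIntegral.integral_congr (fun t _ => inner2 t)]
      have hrw : ∀ t : ℝ, (Real.exp c - 1) / c * Real.exp (c * (t - 1))
          = Real.exp (c * t) * ((Real.exp c - 1) / c * Real.exp (-c)) := by
        intro t
        rw [show c * (t - 1) = c * t + (-c) by ring, Real.exp_add]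
        ring
      rw [intervalIntegral.integral_congr (fun t _ => hrw t)]
      rw [intervalIntegral.integral_mul_const, int_exp_mul c hc]
      rw [hexpc, hexpc']
      field_simp
      ring
    refine ⟨by rw [outer1, outer2], fun _ => outer1, fun h => absurd h hne⟩
end

section
/- Let Ω be a real symmetric n×n matrix with orthogonal diagonalization e^Ω = Qᵀ diag(λ₁,...,λ_n) Q. Then ∫₀¹ e^{tΩ} ⊗ e^{(1−t)Ω} dt = (Q ⊗ Q)ᵀ M (Q ⊗ Q), where M is the n²×n² diagonal matrix whose ((i−1)n+j)-th diagonal entry equals λ_i if λ_i = λ_j and (λ_i − λ_j)/(log λ_i − log λ_j) if λ_i ≠ λ_j. -/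
/-!
Since `Ω` is symmetric and the real exponential is injective on symmetric matrices, the hypothesis
forces `Ω = Qᵀ diag(log λ) Q`. Hence `e^{tΩ} = Qᵀ diag(λ^t) Q`, and the mixed-product rule turns
`e^{tΩ} ⊗ e^{(1-t)Ω}` into `(Q ⊗ Q)ᵀ diag(λᵢ^t λⱼ^(1-t)) (Q ⊗ Q)`. Integrating entrywise, the
conjugation commutes with the integral and each diagonal entry is the logarithmic mean
`∫₀¹ λᵢ^t λⱼ^(1-t) dt`.
-/

open Matrix Kronecker

namespace Matrix

variable {m : Type*} [Fintype m] [DecidableEq m]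

theorem exp_diagonal_real (v : m → ℝ) :
    NormedSpace.exp (diagonal v) = diagonal (Real.exp ∘ v) := by
  rw [exp_diagonal, Pi.exp_def, Real.exp_eq_exp_ℝ]
  rfl

theorem exp_transpose_mul_mul_of_transpose_mul_self {Q : Matrix m m ℝ} (hQ : Qᵀ * Q = 1)
    (A : Matrix m m ℝ) : NormedSpace.exp (Qᵀ * A * Q) = Qᵀ * NormedSpace.exp A * Q := by
  rw [← inv_eq_left_inv hQ]
  exact exp_conj' Q A ((isUnit_iff_isUnit_det Q).2 (isUnit_det_of_left_inverse hQ))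

theorem IsHermitian.eq_of_exp_eq {A B : Matrix m m ℝ} (hA : A.IsHermitian) (hB : B.IsHermitian)
    (h : NormedSpace.exp A = NormedSpace.exp B) : A = B := by
  -- the continuous functional calculus needs a C⋆-norm on matrices; `exp` does not depend on it
  let : NormedRing (Matrix m m ℝ) := instL2OpNormedRing
  let : NormedAlgebra ℝ (Matrix m m ℝ) := instL2OpNormedAlgebra
  rw [← CFC.log_exp A hA.isSelfAdjoint, h, CFC.log_exp B hB.isSelfAdjoint]

theorem eq_transpose_mul_diagonal_log_mul {Ω Q : Matrix m m ℝ} {lam : m → ℝ} (hΩ : Ω.IsSymm)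
    (hlam : ∀ i, 0 < lam i) (hQ : Qᵀ * Q = 1)
    (hexp : NormedSpace.exp Ω = Qᵀ * diagonal lam * Q) :
    Ω = Qᵀ * diagonal (Real.log ∘ lam) * Q := by
  refine IsHermitian.eq_of_exp_eq (isHermitian_iff_isSymm.2 hΩ) ?_ ?_
  · simpa [conjTranspose_eq_transpose_of_trivial] using
      isHermitian_conjTranspose_mul_mul Q (isHermitian_diagonal (Real.log ∘ lam))
  · rw [exp_transpose_mul_mul_of_transpose_mul_self hQ, exp_diagonal_real, hexp]
    congr
    funext i
    exact (Real.exp_log (hlam i)).symm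

theorem exp_smul_transpose_mul_diagonal_log_mul {Q : Matrix m m ℝ} (hQ : Qᵀ * Q = 1)
    {lam : m → ℝ} (hlam : ∀ i, 0 < lam i) (t : ℝ) :
    NormedSpace.exp (t • (Qᵀ * diagonal (Real.log ∘ lam) * Q)) =
      Qᵀ * diagonal (fun i => lam i ^ t) * Q := by
  rw [← Matrix.smul_mul, ← Matrix.mul_smul, ← diagonal_smul,
    exp_transpose_mul_mul_of_transpose_mul_self hQ, exp_diagonal_real]
  congr
  funext i
  simp [Real.rpow_def_of_pos (hlam i), mul_comm]

end Matrix

theorem Matrix.transpose_mul_mul_kronecker_transpose_mul_mul {R m n k l : Type*}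
    [CommSemiring R] [Fintype m] [Fintype n] (P : Matrix m k R) (Q : Matrix n l R)
    (A : Matrix m m R) (B : Matrix n n R) :
    (Pᵀ * A * P) ⊗ₖ (Qᵀ * B * Q) = (P ⊗ₖ Q)ᵀ * (A ⊗ₖ B) * (P ⊗ₖ Q) := by
  rw [mul_kronecker_mul, mul_kronecker_mul, kroneckerMap_transpose]

section EntrywiseIntegral

open intervalIntegral

variable {a b : ℝ} {μ : MeasureTheory.Measure ℝ}

theorem Matrix.intervalIntegrable_diagonal_apply {m : Type*} [DecidableEq m] {f : ℝ → m → ℝ}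
    (hf : ∀ i, IntervalIntegrable (fun t => f t i) μ a b) (i j : m) :
    IntervalIntegrable (fun t => diagonal (f t) i j) μ a b := by
  by_cases hij : i = j
  · simpa only [hij, diagonal_apply_eq] using hf j
  · simp only [diagonal_apply_ne _ hij]
    exact (intervalIntegrable_const_iff (by simp)).2 (Or.inl rfl)

theorem Matrix.of_intervalIntegral_mul_mul {l m n k : Type*} [Fintype m] [Fintype n]
    (A : Matrix l m ℝ) (F : ℝ → Matrix m n ℝ) (B : Matrix n k ℝ)
    (hF : ∀ i j, IntervalIntegrable (fun t => F t i j) μ a b) :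
    (of fun i j => ∫ t in a..b, (A * F t * B) i j ∂μ) =
      A * (of fun i j => ∫ t in a..b, F t i j ∂μ) * B := by
  ext i j
  simp only [of_apply, mul_apply, Finset.sum_mul]
  rw [integral_finsetSum fun y _ => ?_]
  · refine Finset.sum_congr rfl fun y _ => ?_
    rw [integral_finsetSum fun x _ => ((hF x y).const_mul _).mul_const _]
    simp only [integral_mul_const, integral_const_mul]
  · simpa only [Finset.sum_fn] using
      IntervalIntegrable.sum _ fun x _ => ((hF x y).const_mul (A i x)).mul_const (B y j)

theorem Matrix.of_intervalIntegral_diagonal {m : Type*} [DecidableEq m] (f : ℝ → m → ℝ) :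
    (of fun i j => ∫ t in a..b, diagonal (f t) i j ∂μ) =
      diagonal fun i => ∫ t in a..b, f t i ∂μ := by
  ext i j
  by_cases hij : i = j
  · simp [hij]
  · simp [hij]

end EntrywiseIntegral

open Real in
theorem integral_rpow_mul_rpow_one_sub {x y : ℝ} (hx : 0 < x) (hy : 0 < y) :
    ∫ t in (0 : ℝ)..1, x ^ t * y ^ (1 - t) =
      if x = y then x else (x - y) / (log x - log y) := by
  split_ifs with hxy
  · subst hxy
    simp [← rpow_add hx]
  · have hlog : log x - log y ≠ 0 :=
      sub_ne_zero.2 fun h => hxy (log_injOn_pos hx hy h)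
    have hexp : ∀ t : ℝ, x ^ t * y ^ (1 - t) = exp ((log x - log y) * t + log y) := by
      intro t
      rw [rpow_def_of_pos hx, rpow_def_of_pos hy, ← exp_add]
      ring_nf
    simp only [hexp]
    rw [intervalIntegral.integral_comp_mul_add _ hlog, integral_exp]
    simp [exp_log hx, exp_log hy, div_eq_inv_mul]

theorem integral_exp_kron_diagonalization_general {n : ℕ}
    (Ω Q : Matrix (Fin n) (Fin n) ℝ) (lam : Fin n → ℝ)
    (hΩ : Ω.IsSymm) (hlam : ∀ i, 0 < lam i)
    (hQ : Qᵀ * Q = 1)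
    (hdiag : NormedSpace.exp Ω = Qᵀ * Matrix.diagonal lam * Q) :
    (Matrix.of fun p q : Fin n × Fin n =>
        ∫ t in (0 : ℝ)..1,
          ((NormedSpace.exp (t • Ω)) ⊗ₖ (NormedSpace.exp ((1 - t) • Ω))) p q) =
      (Q ⊗ₖ Q)ᵀ *
        (Matrix.diagonal fun p : Fin n × Fin n =>
          if lam p.1 = lam p.2 then lam p.1
          else (lam p.1 - lam p.2) / (Real.log (lam p.1) - Real.log (lam p.2))) *
        (Q ⊗ₖ Q) := by
  have hkron : ∀ t : ℝ, NormedSpace.exp (t • Ω) ⊗ₖ NormedSpace.exp ((1 - t) • Ω) =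
      (Q ⊗ₖ Q)ᵀ * diagonal (fun p => lam p.1 ^ t * lam p.2 ^ (1 - t)) * (Q ⊗ₖ Q) := by
    intro t
    rw [eq_transpose_mul_diagonal_log_mul hΩ hlam hQ hdiag,
      exp_smul_transpose_mul_diagonal_log_mul hQ hlam,
      exp_smul_transpose_mul_diagonal_log_mul hQ hlam,
      transpose_mul_mul_kronecker_transpose_mul_mul, diagonal_kronecker_diagonal]
  have hint : ∀ p : Fin n × Fin n,
      IntervalIntegrable (fun t : ℝ => lam p.1 ^ t * lam p.2 ^ (1 - t)) MeasureTheory.volume 0 1 :=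
    fun p => Continuous.intervalIntegrable (by fun_prop (disch := exact (hlam _).ne')) _ _
  simp only [hkron]
  rw [of_intervalIntegral_mul_mul _ _ _ (intervalIntegrable_diagonal_apply hint),
    of_intervalIntegral_diagonal]
  simp only [integral_rpow_mul_rpow_one_sub (hlam _) (hlam _)]

/-- Let `Ω` be a real symmetric `n×n` matrix with `e^Ω = Qᵀ diag(λ) Q`, `Q` orthogonal.
Then `∫₀¹ e^{tΩ} ⊗ e^{(1−t)Ω} dt = (Q ⊗ Q)ᵀ M (Q ⊗ Q)` where `M` is diagonal with
entries `λᵢ` (if `λᵢ = λⱼ`) and `(λᵢ − λⱼ)/(log λᵢ − log λⱼ)` (if `λᵢ ≠ λⱼ`);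
the integral is taken entrywise. -/
theorem integral_exp_kron_diagonalization {n : ℕ}
    (Ω Q : Matrix (Fin n) (Fin n) ℝ) (lam : Fin n → ℝ)
    (hΩ : Ω.IsSymm) (hlam : ∀ i, 0 < lam i)
    (hQ : Qᵀ * Q = 1) (hQ' : Q * Qᵀ = 1)
    (hdiag : NormedSpace.exp Ω = Qᵀ * Matrix.diagonal lam * Q) :
    (Matrix.of fun p q : Fin n × Fin n =>
        ∫ t in (0 : ℝ)..1,
          ((NormedSpace.exp (t • Ω)) ⊗ₖ (NormedSpace.exp ((1 - t) • Ω))) p q) =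
      (Q ⊗ₖ Q)ᵀ *
        (Matrix.diagonal fun p : Fin n × Fin n =>
          if lam p.1 = lam p.2 then lam p.1
          else (lam p.1 - lam p.2) / (Real.log (lam p.1) - Real.log (lam p.2))) *
        (Q ⊗ₖ Q) :=
  integral_exp_kron_diagonalization_general Ω Q lam hΩ hlam hQ hdiag
end

section
/- Let Ω be a real symmetric n×n matrix whose exponential e^Ω has all eigenvalues in an interval [c, C] with 0 < c ≤ C < ∞. Then the spectral norm of Ψ := ∫₀¹ e^{tΩ} ⊗ e^{(1−t)Ω} dt is at most C: every eigenvalue of Ψ is of the form λ_i (if λ_i = λ_j) or (λ_i − λ_j)/(log λ_i − log λ_j) (if λ_i ≠ λ_j), and in both cases lies in [c, C]. -/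
/-!
Write `e^{sΩ} = cfc (x ↦ e^{sx}) Ω`. Since the spectrum of `e^Ω` lies in `[c, C]`, the spectrum
of `e^{sΩ}` lies in `[c^s, C^s]` for `s ≥ 0`, i.e. `c^s • 1 ≤ e^{sΩ} ≤ C^s • 1` in the Loewner
order. The Kronecker product is monotone on positive semidefinite matrices and
`c^t c^{1-t} = c`, so every integrand `e^{tΩ} ⊗ e^{(1-t)Ω}` lies between `c • 1` and `C • 1`.
Averaging over `t ∈ [0, 1]` keeps the quadratic form of `Ψ` between `c |x|²` and `C |x|²`, and
this bounds the eigenvalues of `Ψ` as well.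
-/

open Matrix Kronecker
open scoped MatrixOrder ComplexOrder

theorem Continuous.matrix_kronecker {X R l m n p : Type*} [TopologicalSpace X]
    [TopologicalSpace R] [Mul R] [ContinuousMul R] {f : X → Matrix l m R}
    {g : X → Matrix n p R} (hf : Continuous f) (hg : Continuous g) :
    Continuous fun x => f x ⊗ₖ g x :=
  continuous_pi fun i => continuous_pi fun j =>
    (hf.matrix_elem i.1 j.1).mul (hg.matrix_elem i.2 j.2)

namespace Matrix

variable {m n : Type*}

theorem kronecker_le_kronecker {𝕜 : Type*} [RCLike 𝕜] [Finite m] [Finite n]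
    {A A' : Matrix m m 𝕜} {B B' : Matrix n n 𝕜}
    (hA : 0 ≤ A) (hAA' : A ≤ A') (hB : 0 ≤ B) (hBB' : B ≤ B') : A ⊗ₖ B ≤ A' ⊗ₖ B' := by
  have hdiff : A' ⊗ₖ B' - A ⊗ₖ B = (A' - A) ⊗ₖ B' + A ⊗ₖ (B' - B) := by
    ext ⟨i, j⟩ ⟨k, l⟩
    simp only [sub_apply, add_apply, kroneckerMap_apply]
    ring
  rw [le_iff, hdiff]
  exact ((le_iff.mp hAA').kronecker (hB.trans hBB').posSemidef).add
    (hA.posSemidef.kronecker (le_iff.mp hBB'))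

theorem smul_one_kronecker_smul_one {R : Type*} [CommSemiring R] [DecidableEq m]
    [DecidableEq n] (a b : R) :
    (a • 1 : Matrix m m R) ⊗ₖ (b • 1 : Matrix n n R) = (a * b) • 1 := by
  rw [smul_kronecker, kronecker_smul, one_kronecker_one, smul_smul, mul_comm]

section Fintype

variable [Fintype m]

theorem dotProduct_mulVec_entrywise_integral {K : ℝ → Matrix m m ℝ} {a b : ℝ}
    (hK : ∀ p q, IntervalIntegrable (fun t => K t p q) MeasureTheory.volume a b)
    (x : m → ℝ) :
    x ⬝ᵥ of (fun p q => ∫ t in a..b, K t p q) *ᵥ x = ∫ t in a..b, x ⬝ᵥ K t *ᵥ x := by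
  have hterm : ∀ p q,
      IntervalIntegrable (fun t => x p * (K t p q * x q)) MeasureTheory.volume a b :=
    fun p q => ((hK p q).mul_const _).const_mul _
  simp only [dotProduct, mulVec, of_apply, Finset.mul_sum]
  rw [intervalIntegral.integral_finsetSum]
  · refine Finset.sum_congr rfl fun p _ => ?_
    rw [intervalIntegral.integral_finsetSum fun q _ => hterm p q]
    simp only [intervalIntegral.integral_const_mul, intervalIntegral.integral_mul_const]
  · exact fun p _ => by
      simpa only [Finset.sum_fn] using IntervalIntegrable.sum _ fun q _ => hterm p q

theorem mem_Icc_of_hasEigenvalue {M : Matrix m m ℝ} {a b μ : ℝ}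
    (hM : ∀ x, x ⬝ᵥ M *ᵥ x ∈ Set.Icc (a * (x ⬝ᵥ x)) (b * (x ⬝ᵥ x)))
    (hμ : Module.End.HasEigenvalue M.mulVecLin μ) : μ ∈ Set.Icc a b := by
  obtain ⟨v, hv, hv0⟩ := hμ.exists_hasEigenvector
  have hMv : M *ᵥ v = μ • v := Module.End.mem_eigenspace_iff.mp hv
  have hvv : 0 < v ⬝ᵥ v := by simpa using dotProduct_star_self_pos_iff.mpr hv0
  have hquad := hM v
  rw [hMv, dotProduct_smul, smul_eq_mul] at hquad
  exact ⟨le_of_mul_le_mul_right hquad.1 hvv, le_of_mul_le_mul_right hquad.2 hvv⟩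

variable [DecidableEq m]

theorem dotProduct_mulVec_mem_Icc_of_mem_Icc {M : Matrix m m ℝ} {a b : ℝ}
    (hM : M ∈ Set.Icc (a • 1) (b • 1)) (x : m → ℝ) :
    x ⬝ᵥ M *ᵥ x ∈ Set.Icc (a * (x ⬝ᵥ x)) (b * (x ⬝ᵥ x)) := by
  have hlo := (le_iff.mp hM.1).dotProduct_mulVec_nonneg x
  have hhi := (le_iff.mp hM.2).dotProduct_mulVec_nonneg x
  simp only [star_trivial, sub_mulVec, smul_mulVec, one_mulVec, dotProduct_sub,
    dotProduct_smul, smul_eq_mul, sub_nonneg] at hlo hhi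
  exact ⟨hlo, hhi⟩

theorem dotProduct_mulVec_entrywise_integral_mem_Icc {K : ℝ → Matrix m m ℝ}
    (hK : Continuous K) {a b : ℝ} (hKab : ∀ t ∈ Set.Icc (0 : ℝ) 1, K t ∈ Set.Icc (a • 1) (b • 1))
    (x : m → ℝ) :
    x ⬝ᵥ of (fun p q => ∫ t in (0 : ℝ)..1, K t p q) *ᵥ x ∈
      Set.Icc (a * (x ⬝ᵥ x)) (b * (x ⬝ᵥ x)) := by
  have hquad : Continuous fun t => x ⬝ᵥ K t *ᵥ x :=
    continuous_const.dotProduct (hK.matrix_mulVec continuous_const)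
  have hbounds t (ht : t ∈ Set.Icc (0 : ℝ) 1) := dotProduct_mulVec_mem_Icc_of_mem_Icc (hKab t ht) x
  rw [dotProduct_mulVec_entrywise_integral
    fun p q => (hK.matrix_elem p q).intervalIntegrable 0 1]
  have hconst : ∀ r : ℝ, IntervalIntegrable (fun _ => r) MeasureTheory.volume 0 1 :=
    fun _ => intervalIntegrable_const
  constructor
  · simpa using intervalIntegral.integral_mono_on zero_le_one (hconst _)
      (hquad.intervalIntegrable 0 1) fun t ht => (hbounds t ht).1
  · simpa using intervalIntegral.integral_mono_on zero_le_one (hquad.intervalIntegrable 0 1)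
      (hconst _) fun t ht => (hbounds t ht).2

-- The L2 operator norm is used because its topology is definitionally the entrywise one.
open scoped Matrix.Norms.L2Operator in
theorem continuous_exp_smul (A : Matrix m m ℝ) :
    Continuous fun t : ℝ => NormedSpace.exp (t • A) :=
  continuous_iff_continuousAt.2 fun t => (hasDerivAt_exp_smul_const (𝕂 := ℝ) A t).continuousAt

open scoped Matrix.Norms.L2Operator in
theorem IsHermitian.exp_smul_eq_cfc {Ω : Matrix m m ℝ} (hΩ : Ω.IsHermitian) (s : ℝ) :
    NormedSpace.exp (s • Ω) = cfc (fun x => Real.exp (s * x)) Ω := by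
  have hΩ' : IsSelfAdjoint Ω := isHermitian_iff_isSelfAdjoint.mp hΩ
  rw [← CFC.real_exp_eq_normedSpace_exp, ← cfc_comp_smul s Real.exp Ω]
  rfl

theorem IsHermitian.exp_smul_mem_Icc {Ω : Matrix m m ℝ} (hΩ : Ω.IsHermitian) {c C s : ℝ}
    (hc : 0 ≤ c) (hs : 0 ≤ s) (hspec : spectrum ℝ (NormedSpace.exp Ω) ⊆ Set.Icc c C) :
    NormedSpace.exp (s • Ω) ∈ Set.Icc (c ^ s • 1) (C ^ s • 1) := by
  have hΩ' : IsSelfAdjoint Ω := isHermitian_iff_isSelfAdjoint.mp hΩ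
  have hexp : ∀ x ∈ spectrum ℝ Ω, Real.exp x ∈ Set.Icc c C := by
    rw [← one_smul ℝ Ω, hΩ.exp_smul_eq_cfc, cfc_map_spectrum _ Ω] at hspec
    exact fun x hx => hspec ⟨x, hx, by simp⟩
  simp only [hΩ.exp_smul_eq_cfc, ← Algebra.algebraMap_eq_smul_one]
  refine ⟨algebraMap_le_cfc _ _ _ fun x hx => ?_, cfc_le_algebraMap _ _ _ fun x hx => ?_⟩
  all_goals rw [mul_comm, Real.exp_mul]
  · exact Real.rpow_le_rpow hc (hexp x hx).1 hs
  · exact Real.rpow_le_rpow (Real.exp_pos x).le (hexp x hx).2 hs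

theorem IsHermitian.exp_smul_kronecker_exp_one_sub_smul_mem_Icc {Ω : Matrix m m ℝ}
    (hΩ : Ω.IsHermitian) {c C t : ℝ} (hc : 0 ≤ c) (hC : 0 ≤ C)
    (hspec : spectrum ℝ (NormedSpace.exp Ω) ⊆ Set.Icc c C) (ht : t ∈ Set.Icc 0 1) :
    NormedSpace.exp (t • Ω) ⊗ₖ NormedSpace.exp ((1 - t) • Ω) ∈ Set.Icc (c • 1) (C • 1) := by
  obtain ⟨hlo, hhi⟩ := hΩ.exp_smul_mem_Icc hc ht.1 hspec
  obtain ⟨hlo', hhi'⟩ := hΩ.exp_smul_mem_Icc hc (sub_nonneg.mpr ht.2) hspec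
  have hsplit {r : ℝ} (hr : 0 ≤ r) : r = r ^ t * r ^ (1 - t) := by
    rw [← Real.rpow_add' hr (by simp), add_sub_cancel, Real.rpow_one]
  have hnonneg {r : ℝ} (s : ℝ) (hr : 0 ≤ r) : (0 : Matrix m m ℝ) ≤ r ^ s • 1 :=
    (PosSemidef.one.smul (Real.rpow_nonneg hr s)).nonneg
  constructor
  · rw [hsplit hc, ← smul_one_kronecker_smul_one]
    exact kronecker_le_kronecker (hnonneg t hc) hlo (hnonneg _ hc) hlo'
  · rw [hsplit hC, ← smul_one_kronecker_smul_one]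
    exact kronecker_le_kronecker ((hnonneg t hc).trans hlo) hhi ((hnonneg _ hc).trans hlo') hhi'

end Fintype

end Matrix

/-- Let `Ω` be a real symmetric `n×n` matrix whose exponential `e^Ω` has all eigenvalues
in `[c, C]` with `0 < c ≤ C`.  Then every eigenvalue of
`Ψ := ∫₀¹ e^{tΩ} ⊗ e^{(1−t)Ω} dt` (integral taken entrywise) lies in `[c, C]`, and the
spectral norm of `Ψ` is at most `C` (expressed via the quadratic form of the symmetric
matrix `Ψ`). -/
theorem eigenvalues_Psi_bounded {n : ℕ}
    (Ω : Matrix (Fin n) (Fin n) ℝ) (hΩ : Ω.IsSymm) (c C : ℝ) (hc : 0 < c) (hcC : c ≤ C)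
    (heig : ∀ μ : ℝ, Module.End.HasEigenvalue (NormedSpace.exp Ω).mulVecLin μ →
      μ ∈ Set.Icc c C) :
    let Ψ : Matrix (Fin n × Fin n) (Fin n × Fin n) ℝ :=
      Matrix.of fun p q =>
        ∫ t in (0 : ℝ)..1,
          ((NormedSpace.exp (t • Ω)) ⊗ₖ (NormedSpace.exp ((1 - t) • Ω))) p q
    (∀ μ : ℝ, Module.End.HasEigenvalue Ψ.mulVecLin μ → μ ∈ Set.Icc c C) ∧
    (∀ x : Fin n × Fin n → ℝ, x ⬝ᵥ Ψ.mulVec x ≤ C * (x ⬝ᵥ x)) := by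
  intro Ψ
  have hΩ' : Ω.IsHermitian := isHermitian_iff_isSymm.mpr hΩ
  have hspec : spectrum ℝ (NormedSpace.exp Ω) ⊆ Set.Icc c C := fun μ hμ =>
    heig μ (.of_mem_spectrum (by rwa [← toLin'_apply', spectrum_toLin']))
  have hcont : Continuous fun t : ℝ =>
      NormedSpace.exp (t • Ω) ⊗ₖ NormedSpace.exp ((1 - t) • Ω) :=
    (continuous_exp_smul Ω).matrix_kronecker
      ((continuous_exp_smul Ω).comp (continuous_const.sub continuous_id))
  have hquad : ∀ x, x ⬝ᵥ Ψ *ᵥ x ∈ Set.Icc (c * (x ⬝ᵥ x)) (C * (x ⬝ᵥ x)) :=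
    dotProduct_mulVec_entrywise_integral_mem_Icc hcont fun t ht =>
      hΩ'.exp_smul_kronecker_exp_one_sub_smul_mem_Icc hc.le (hc.le.trans hcC) hspec ht
  exact ⟨fun μ hμ => mem_Icc_of_hasEigenvalue hquad hμ, fun x => (hquad x).2⟩
end

section
/- For any n×n real positive definite matrix Θ, the n²×n² matrices ∫₀¹ [t(Θ−I)+I]⁻¹ ⊗ [t(Θ−I)+I]⁻¹ dt and ∫₀¹ e^{t log Θ} ⊗ e^{(1−t) log Θ} dt are inverses of each other. -/
/-!
Diagonalise `L = U diag(d) Uᵀ` with `U` orthogonal. Then `Θ = U diag(e^d) Uᵀ`, and conjugation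
by the orthogonal matrix `U ⊗ U` turns both integrands, hence both integrals, into diagonal
matrices. The diagonal entry of the first at `(i, j)` is the divided difference of `log` at
`(e^{d i}, e^{d j})`, that of the second the divided difference of `exp` at `(d i, d j)`; these
are reciprocal because `exp` and `log` are inverse functions.
-/

open Matrix Kronecker Unitary intervalIntegral

section Scalar

open Real

variable {a b : ℝ}

lemma mul_sub_one_add_one_pos {t : ℝ} (ht₀ : 0 ≤ t) (ht₁ : t ≤ 1) (ha : 0 < a) :
    0 < t * (a - 1) + 1 := by
  rcases ht₁.lt_or_eq with ht | rfl
  · nlinarith [mul_nonneg ht₀ ha.le]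
  · linarith

lemma continuousOn_inv_mul_sub_one_add_one (ha : 0 < a) :
    ContinuousOn (fun t : ℝ => (t * (a - 1) + 1)⁻¹) (Set.uIcc 0 1) := by
  refine ContinuousOn.inv₀ (by fun_prop) fun t ht => ?_
  rw [Set.uIcc_of_le zero_le_one] at ht
  exact (mul_sub_one_add_one_pos ht.1 ht.2 ha).ne'

lemma sub_mul_integral_exp_mul_exp_one_sub (μ ν : ℝ) :
    (μ - ν) * ∫ t in (0 : ℝ)..1, exp (t * μ) * exp ((1 - t) * ν) = exp μ - exp ν := by
  have h := mul_integral_comp_mul_add (f := exp) (μ - ν) ν (a := 0) (b := 1)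
  simp only [mul_zero, zero_add, mul_one, sub_add_cancel, integral_exp] at h
  rw [← h]
  congr 1
  refine integral_congr fun t _ => ?_
  simp only [← exp_add]
  ring_nf

lemma integral_exp_mul_exp_one_sub_self (μ : ℝ) :
    ∫ t in (0 : ℝ)..1, exp (t * μ) * exp ((1 - t) * μ) = exp μ := by
  simp [← exp_add, ← add_mul]

lemma integral_sub_one_mul_inv (ha : 0 < a) :
    ∫ t in (0 : ℝ)..1, (a - 1) * (t * (a - 1) + 1)⁻¹ = log a := by
  have h := mul_integral_comp_mul_add (f := fun x => x⁻¹) (a - 1) 1 (a := 0) (b := 1)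
  simp only [mul_zero, zero_add, mul_one, sub_add_cancel, integral_inv_of_pos one_pos ha,
    div_one] at h
  rw [← h, ← integral_const_mul]
  simp only [mul_comm]

lemma sub_mul_integral_inv_mul_inv (ha : 0 < a) (hb : 0 < b) :
    (a - b) * ∫ t in (0 : ℝ)..1, (t * (a - 1) + 1)⁻¹ * (t * (b - 1) + 1)⁻¹ = log a - log b := by
  rw [← integral_sub_one_mul_inv ha, ← integral_sub_one_mul_inv hb, ← integral_const_mul,
    ← integral_sub ((continuousOn_inv_mul_sub_one_add_one ha).intervalIntegrable.const_mul _)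
      ((continuousOn_inv_mul_sub_one_add_one hb).intervalIntegrable.const_mul _)]
  -- partial fractions: `(a - 1) y - (b - 1) x = a - b` for `x = t (a - 1) + 1`, `y = t (b - 1) + 1`
  refine integral_congr fun t ht => ?_
  rw [Set.uIcc_of_le zero_le_one] at ht
  have := (mul_sub_one_add_one_pos ht.1 ht.2 ha).ne'
  have := (mul_sub_one_add_one_pos ht.1 ht.2 hb).ne'
  field_simp
  ring

lemma integral_inv_mul_inv_self (ha : 0 < a) :
    ∫ t in (0 : ℝ)..1, (t * (a - 1) + 1)⁻¹ * (t * (a - 1) + 1)⁻¹ = a⁻¹ := by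
  have hderiv : ∀ t ∈ Set.uIcc (0 : ℝ) 1, HasDerivAt (fun s => s / (s * (a - 1) + 1))
      ((t * (a - 1) + 1)⁻¹ * (t * (a - 1) + 1)⁻¹) t := by
    intro t ht
    rw [Set.uIcc_of_le zero_le_one] at ht
    have hpos := (mul_sub_one_add_one_pos ht.1 ht.2 ha).ne'
    refine ((hasDerivAt_id' t).div (((hasDerivAt_id' t).mul_const (a - 1)).add_const 1)
      hpos).congr_deriv ?_
    field_simp
    ring
  rw [integral_eq_sub_of_hasDerivAt hderiv
    ((continuousOn_inv_mul_sub_one_add_one ha).mul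
      (continuousOn_inv_mul_sub_one_add_one ha)).intervalIntegrable]
  simp

lemma integral_inv_mul_inv_mul_integral_exp_mul_exp (μ ν : ℝ) :
    (∫ t in (0 : ℝ)..1, (t * (exp μ - 1) + 1)⁻¹ * (t * (exp ν - 1) + 1)⁻¹) *
      (∫ t in (0 : ℝ)..1, exp (t * μ) * exp ((1 - t) * ν)) = 1 := by
  rcases eq_or_ne μ ν with rfl | hμν
  · rw [integral_inv_mul_inv_self (exp_pos μ), integral_exp_mul_exp_one_sub_self,
      inv_mul_cancel₀ (exp_pos μ).ne']
  · set I := ∫ t in (0 : ℝ)..1, exp (t * μ) * exp ((1 - t) * ν)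
    have hlog := sub_mul_integral_inv_mul_inv (exp_pos μ) (exp_pos ν)
    rw [log_exp, log_exp] at hlog
    have hexp : exp μ - exp ν ≠ 0 := sub_ne_zero.2 (exp_injective.ne hμν)
    refine mul_left_cancel₀ (mul_ne_zero hexp (sub_ne_zero.2 hμν)) ?_
    linear_combination (μ - ν) * I * hlog + (μ - ν) * sub_mul_integral_exp_mul_exp_one_sub μ ν

end Scalar

section Conjugation

variable {m n R : Type*} [Fintype m] [DecidableEq m] [Fintype n] [DecidableEq n]

def Matrix.kroneckerUnitary [CommRing R] [StarRing R] (u₁ : unitary (Matrix m m R))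
    (u₂ : unitary (Matrix n n R)) : unitary (Matrix (m × n) (m × n) R) :=
  ⟨u₁ ⊗ₖ u₂, kronecker_mem_unitary u₁.2 u₂.2⟩

lemma conjStarAlgAut_kronecker [CommRing R] [StarRing R] (u₁ : unitary (Matrix m m R))
    (u₂ : unitary (Matrix n n R)) (X : Matrix m m R) (Y : Matrix n n R) :
    conjStarAlgAut R _ u₁ X ⊗ₖ conjStarAlgAut R _ u₂ Y =
      conjStarAlgAut R (Matrix (m × n) (m × n) R) (kroneckerUnitary u₁ u₂) (X ⊗ₖ Y) := by
  simp only [conjStarAlgAut_apply, kroneckerUnitary, mul_kronecker_mul, star_eq_conjTranspose,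
    conjTranspose_kronecker]

lemma inv_conjStarAlgAut_diagonal [Field R] [StarRing R] (u : unitary (Matrix m m R))
    {c : m → R} (hc : ∀ i, c i ≠ 0) :
    (conjStarAlgAut R _ u (diagonal c))⁻¹ = conjStarAlgAut R _ u (diagonal c⁻¹) := by
  refine inv_eq_right_inv ?_
  rw [← map_mul, diagonal_mul_diagonal]
  simp [hc]

lemma exp_conjStarAlgAut {𝕜 : Type*} [RCLike 𝕜] (u : unitary (Matrix m m 𝕜))
    (X : Matrix m m 𝕜) :
    NormedSpace.exp (conjStarAlgAut 𝕜 _ u X) = conjStarAlgAut 𝕜 _ u (NormedSpace.exp X) := by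
  have hinv : (u : Matrix m m 𝕜)⁻¹ = star (u : Matrix m m 𝕜) :=
    inv_eq_left_inv (Unitary.coe_star_mul_self u)
  rw [conjStarAlgAut_apply, conjStarAlgAut_apply, ← hinv]
  exact exp_conj _ X Unitary.isUnit_coe

lemma smul_sub_one_add_one_conjStarAlgAut_diagonal [CommRing R] [StarRing R]
    (u : unitary (Matrix m m R)) (v : m → R) (t : R) :
    t • (conjStarAlgAut R _ u (diagonal v) - 1) + 1 =
      conjStarAlgAut R _ u (diagonal fun i => t * (v i - 1) + 1) := by
  rw [← map_one (conjStarAlgAut R _ u), ← map_sub, ← map_smul, ← map_add, ← diagonal_one,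
    diagonal_sub, ← diagonal_smul, diagonal_add]
  rfl

lemma exp_conjStarAlgAut_diagonal (u : unitary (Matrix m m ℝ)) (d : m → ℝ) :
    NormedSpace.exp (conjStarAlgAut ℝ _ u (diagonal d)) =
      conjStarAlgAut ℝ _ u (diagonal fun i => Real.exp (d i)) := by
  rw [exp_conjStarAlgAut, exp_diagonal, Pi.exp_def, Real.exp_eq_exp_ℝ]

lemma exp_smul_conjStarAlgAut_diagonal (u : unitary (Matrix m m ℝ)) (d : m → ℝ) (s : ℝ) :
    NormedSpace.exp (s • conjStarAlgAut ℝ _ u (diagonal d)) =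
      conjStarAlgAut ℝ _ u (diagonal fun i => Real.exp (s * d i)) := by
  rw [← map_smul, ← diagonal_smul, exp_conjStarAlgAut_diagonal]
  rfl

lemma inv_smul_exp_sub_one_add_one_conjStarAlgAut_diagonal (u : unitary (Matrix m m ℝ))
    (d : m → ℝ) {t : ℝ} (ht : t ∈ Set.uIcc 0 1) :
    (t • (NormedSpace.exp (conjStarAlgAut ℝ _ u (diagonal d)) - 1) + 1)⁻¹ =
      conjStarAlgAut ℝ _ u (diagonal fun i => (t * (Real.exp (d i) - 1) + 1)⁻¹) := by
  rw [Set.uIcc_of_le zero_le_one] at ht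
  rw [exp_conjStarAlgAut_diagonal, smul_sub_one_add_one_conjStarAlgAut_diagonal]
  exact inv_conjStarAlgAut_diagonal u fun i =>
    (mul_sub_one_add_one_pos ht.1 ht.2 (Real.exp_pos (d i))).ne'

end Conjugation

lemma of_intervalIntegral_mul_diagonal_mul {l m n : Type*} [Fintype m] [DecidableEq m]
    {a b : ℝ} (A : Matrix l m ℝ) (B : Matrix m n ℝ) {F : ℝ → Matrix l n ℝ} {c : ℝ → m → ℝ}
    (hc : ∀ i, IntervalIntegrable (fun t => c t i) MeasureTheory.volume a b)
    (hF : Set.EqOn F (fun t => A * diagonal (c t) * B) (Set.uIcc a b)) :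
    of (fun p q => ∫ t in a..b, F t p q) = A * diagonal (fun i => ∫ t in a..b, c t i) * B := by
  ext p q
  rw [of_apply, integral_congr fun t ht => congrFun (congrFun (hF ht) p) q]
  have hentry (d : m → ℝ) : (A * diagonal d * B) p q = ∑ i, A p i * d i * B i q := by
    rw [mul_apply]
    simp only [mul_diagonal]
  simp only [hentry]
  rw [integral_finsetSum fun i _ => ((hc i).const_mul _).mul_const _]
  simp only [integral_mul_const, integral_const_mul]

lemma of_intervalIntegral_kronecker_conjStarAlgAut {m n : Type*} [Fintype m] [DecidableEq m]
    [Fintype n] [DecidableEq n] {a b : ℝ} (u₁ : unitary (Matrix m m ℝ))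
    (u₂ : unitary (Matrix n n ℝ)) {X : ℝ → Matrix m m ℝ} {Y : ℝ → Matrix n n ℝ}
    {f : ℝ → m → ℝ} {g : ℝ → n → ℝ}
    (hfg : ∀ i j, IntervalIntegrable (fun t => f t i * g t j) MeasureTheory.volume a b)
    (hX : Set.EqOn X (fun t => conjStarAlgAut ℝ _ u₁ (diagonal (f t))) (Set.uIcc a b))
    (hY : Set.EqOn Y (fun t => conjStarAlgAut ℝ _ u₂ (diagonal (g t))) (Set.uIcc a b)) :
    of (fun p q => ∫ t in a..b, (X t ⊗ₖ Y t) p q) =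
      conjStarAlgAut ℝ (Matrix (m × n) (m × n) ℝ) (kroneckerUnitary u₁ u₂)
        (diagonal fun r => ∫ t in a..b, f t r.1 * g t r.2) := by
  rw [conjStarAlgAut_apply]
  refine of_intervalIntegral_mul_diagonal_mul _ _ (fun r => hfg r.1 r.2) fun t ht => ?_
  rw [hX ht, hY ht, conjStarAlgAut_kronecker, diagonal_kronecker_diagonal, conjStarAlgAut_apply]

theorem frechet_log_exp_inverse_general {n : ℕ}
    (Θ L : Matrix (Fin n) (Fin n) ℝ)
    (hLs : L.IsSymm) (hL : NormedSpace.exp L = Θ) :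
    let M₁ : Matrix (Fin n × Fin n) (Fin n × Fin n) ℝ :=
      Matrix.of fun p q =>
        ∫ t in (0 : ℝ)..1,
          ((t • (Θ - 1) + 1)⁻¹ ⊗ₖ (t • (Θ - 1) + 1)⁻¹) p q
    let M₂ : Matrix (Fin n × Fin n) (Fin n × Fin n) ℝ :=
      Matrix.of fun p q =>
        ∫ t in (0 : ℝ)..1,
          ((NormedSpace.exp (t • L)) ⊗ₖ (NormedSpace.exp ((1 - t) • L))) p q
    M₁ * M₂ = 1 ∧ M₂ * M₁ = 1 := by
  intro M₁ M₂
  have hLH : L.IsHermitian := by rwa [IsHermitian, conjTranspose_eq_transpose_of_trivial]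
  obtain ⟨u, d, rfl⟩ : ∃ u d, L = conjStarAlgAut ℝ (Matrix (Fin n) (Fin n) ℝ) u (diagonal d) :=
    ⟨_, _, by simpa using hLH.spectral_theorem⟩
  subst hL
  have hM₁ : M₁ = _ := of_intervalIntegral_kronecker_conjStarAlgAut u u
    (fun i j => ((continuousOn_inv_mul_sub_one_add_one (Real.exp_pos (d i))).mul
      (continuousOn_inv_mul_sub_one_add_one (Real.exp_pos (d j)))).intervalIntegrable)
    (fun _ => inv_smul_exp_sub_one_add_one_conjStarAlgAut_diagonal u d)
    (fun _ => inv_smul_exp_sub_one_add_one_conjStarAlgAut_diagonal u d)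
  have hM₂ : M₂ = _ := of_intervalIntegral_kronecker_conjStarAlgAut u u
    (fun i j => (by fun_prop : Continuous _).intervalIntegrable _ _)
    (fun t _ => exp_smul_conjStarAlgAut_diagonal u d t)
    (fun t _ => exp_smul_conjStarAlgAut_diagonal u d (1 - t))
  rw [hM₁, hM₂, ← map_mul, ← map_mul, diagonal_mul_diagonal, diagonal_mul_diagonal]
  simp only [mul_comm (∫ t in (0 : ℝ)..1, Real.exp _ * Real.exp _),
    integral_inv_mul_inv_mul_integral_exp_mul_exp, diagonal_one, map_one, and_self]

/-- For an `n×n` real positive definite matrix `Θ` with principal logarithm `L`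
(the symmetric matrix with `e^L = Θ`), the `n²×n²` matrices
`∫₀¹ [t(Θ−I)+I]⁻¹ ⊗ [t(Θ−I)+I]⁻¹ dt` and `∫₀¹ e^{tL} ⊗ e^{(1−t)L} dt`
(integrals taken entrywise) are two-sided inverses of each other. -/
theorem frechet_log_exp_inverse {n : ℕ}
    (Θ L : Matrix (Fin n) (Fin n) ℝ) (hΘ : Θ.PosDef)
    (hLs : L.IsSymm) (hL : NormedSpace.exp L = Θ) :
    let M₁ : Matrix (Fin n × Fin n) (Fin n × Fin n) ℝ :=
      Matrix.of fun p q =>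
        ∫ t in (0 : ℝ)..1,
          ((t • (Θ - 1) + 1)⁻¹ ⊗ₖ (t • (Θ - 1) + 1)⁻¹) p q
    let M₂ : Matrix (Fin n × Fin n) (Fin n × Fin n) ℝ :=
      Matrix.of fun p q =>
        ∫ t in (0 : ℝ)..1,
          ((NormedSpace.exp (t • L)) ⊗ₖ (NormedSpace.exp ((1 - t) • L))) p q
    M₁ * M₂ = 1 ∧ M₂ * M₁ = 1 :=
  frechet_log_exp_inverse_general Θ L hLs hL
end
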